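/- arXiv:2301.06108 — 3 statements merged into one kernel-verified Lean document; each statement's English description precedes it below -/
import Mathlib

section
/- (Abstract Strang-type error estimate underlying the paper's Strang lemma.) Let V be a real vector space and V_h ⊆ V a linear subspace. Let N_sd, N_sd*, N_sdh, N_s be seminorms on V such that N_sd(z) ≤ N_sd*(z) for all z ∈ V, and N_sd(w) ≤ N_sdh(w) and N_s(w) ≤ N_sdh(w) for all w ∈ V_h. Let a_h and s_h be bilinear forms on V and set A_h = a_h + s_h. Assume: (boundedness) a_h(z, w) ≤ N_sd*(z)·N_sdh(w) for all z ∈ V and w ∈ V_h; (stabilization bound) s_h(v, w) ≤ N_s(v)·N_s(w) for all v, w ∈ V; (inf-sup) there is γ > 0 such that for every v ∈ V_h there exists w ∈ V_h with N_sdh(w) ≤ 1 and A_h(v, w) ≥ γ·N_sdh(v). Let ℓ_h : V_h → ℝ be a linear functional, let u* ∈ V, and let u_h ∈ V_h satisfy A_h(u_h, w) = ℓ_h(w) for all w ∈ V_h. Suppose Λ ≥ 0 satisfies a_h(u*, w) − ℓ_h(w) ≤ Λ·N_sdh(w) for all w ∈ V_h (consistency/geometric residual bound). Then for every v ∈ V_h: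 γ·N_sd(u* − u_h) ≤ (1 + γ)·(N_sd*(u* − v) + N_s(v) + Λ). -/
/-- Abstract Strang-type error estimate decomposing the discretization error into an
approximation error, a consistency error of the stabilization, and a geometric residual. -/
theorem abstract_strang_lemma {V : Type*} [AddCommGroup V] [Module ℝ V]
    (Vh : Submodule ℝ V)
    (Nsd Nsds Nsdh Ns : Seminorm ℝ V)
    (h1 : ∀ z : V, Nsd z ≤ Nsds z)
    (h2 : ∀ w ∈ Vh, Nsd w ≤ Nsdh w)
    (h3 : ∀ w ∈ Vh, Ns w ≤ Nsdh w)
    (ah sh : V →ₗ[ℝ] V →ₗ[ℝ] ℝ)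
    (Ah : V → V → ℝ) (hAh : ∀ v w, Ah v w = ah v w + sh v w)
    (hbdd : ∀ z : V, ∀ w ∈ Vh, ah z w ≤ Nsds z * Nsdh w)
    (hstab : ∀ v w : V, sh v w ≤ Ns v * Ns w)
    (γ : ℝ) (hγ : 0 < γ)
    (hinfsup : ∀ v ∈ Vh, ∃ w ∈ Vh, Nsdh w ≤ 1 ∧ Ah v w ≥ γ * Nsdh v)
    (ℓh : Vh →ₗ[ℝ] ℝ) (ustar uh : V) (huh : uh ∈ Vh)
    (hsol : ∀ w : Vh, Ah uh (w : V) = ℓh w)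
    (Λ : ℝ) (hΛ : 0 ≤ Λ)
    (hcons : ∀ w : Vh, ah ustar (w : V) - ℓh w ≤ Λ * Nsdh (w : V)) :
    ∀ v ∈ Vh, γ * Nsd (ustar - uh) ≤ (1 + γ) * (Nsds (ustar - v) + Ns v + Λ) := by
  intro v hv
  -- key discrete estimate
  obtain ⟨w, hw, hw1, hinf⟩ := hinfsup (v - uh) (Vh.sub_mem hv huh)
  have hNw : 0 ≤ Nsdh w := apply_nonneg _ _
  have hNsw1 : Ns w ≤ 1 := le_trans (h3 w hw) hw1
  have key : γ * Nsdh (v - uh) ≤ Nsds (ustar - v) + Ns v + Λ := by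
    have hA : Ah (v - uh) w = ah (v - ustar) w + (ah ustar ((⟨w, hw⟩ : Vh) : V) - ℓh ⟨w, hw⟩) + sh v w := by
      have := hsol ⟨w, hw⟩
      rw [hAh] at this ⊢
      simp only [map_sub, LinearMap.sub_apply] at *
      linarith [this]
    have b1 : ah (v - ustar) w ≤ Nsds (ustar - v) * Nsdh w := by
      have := hbdd (v - ustar) w hw
      rwa [show Nsds (v - ustar) = Nsds (ustar - v) by
        rw [← neg_sub, map_neg_eq_map]] at this
    have b2 : ah ustar ((⟨w, hw⟩ : Vh) : V) - ℓh ⟨w, hw⟩ ≤ Λ * Nsdh w := hcons ⟨w, hw⟩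
    have b3 : sh v w ≤ Ns v * Ns w := hstab v w
    have hNsv : 0 ≤ Ns v := apply_nonneg _ _
    have hNsds : 0 ≤ Nsds (ustar - v) := apply_nonneg _ _
    calc γ * Nsdh (v - uh) ≤ Ah (v - uh) w := hinf
      _ = ah (v - ustar) w + (ah ustar ((⟨w, hw⟩ : Vh) : V) - ℓh ⟨w, hw⟩) + sh v w := hA
      _ ≤ Nsds (ustar - v) * Nsdh w + Λ * Nsdh w + Ns v * Ns w := by
          exact add_le_add (add_le_add b1 b2) b3
      _ ≤ Nsds (ustar - v) + Ns v + Λ := by nlinarith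
  have tri : Nsd (ustar - uh) ≤ Nsds (ustar - v) + Nsdh (v - uh) := by
    calc Nsd (ustar - uh) ≤ Nsd (ustar - v) + Nsd (v - uh) := by
          simpa using map_add_le_add Nsd (ustar - v) (v - uh)
      _ ≤ Nsds (ustar - v) + Nsdh (v - uh) :=
          add_le_add (h1 _) (h2 _ (Vh.sub_mem hv huh))
  have hNsv : 0 ≤ Ns v := apply_nonneg _ _
  have hNsds : 0 ≤ Nsds (ustar - v) := apply_nonneg _ _
  nlinarith [mul_le_mul_of_nonneg_left tri hγ.le]
end

section
/- (Abstract condition-number estimate underlying the paper's condition number theorem.) Let N ≥ 1 and d ≥ 1 be natural numbers, h > 0, V a real normed vector space, and Φ : ℝᴺ → V a linear map such that c₁·h^{d/2}·‖X‖ ≤ ‖Φ(X)‖ ≤ c₂·h^{d/2}·‖X‖ for all X ∈ ℝᴺ, where c₁, c₂ > 0 and ‖X‖ is the Euclidean norm. Let A : V × V → ℝ be a bilinear form and m, M > 0 constants with A(v, w) ≤ M·h^{-2}·‖v‖·‖w‖ and A(v, v) ≥ m·h^{-1}·‖v‖² for all v, w ∈ V. Let 𝒜 : ℝᴺ → ℝᴺ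 be the unique linear map with ⟨𝒜X, Y⟩ = A(Φ(X), Φ(Y)) for all X, Y ∈ ℝᴺ. Then 𝒜 is bijective and its condition number satisfies κ(𝒜) = ‖𝒜‖·‖𝒜⁻¹‖ ≤ (c₂/c₁)²·(M/m)·h^{-1}, where ‖·‖ denotes the operator norm induced by the Euclidean norm on ℝᴺ. -/
/-!
Through `Φ`, the bounds on `A` become bounds on the Gram operator `𝒜`: the norm scaling of `Φ`
gives `⟪𝒜 X, Y⟫ ≤ (M / h²) (c₂ h^{d/2})² ‖X‖ ‖Y‖` and `⟪𝒜 X, X⟫ ≥ (m / h) (c₁ h^{d/2})² ‖X‖²`.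
Testing the first against `Y = 𝒜 X` bounds `‖𝒜‖`, and Cauchy–Schwarz in the second gives
`‖𝒜 X‖ ≥ (m / h) (c₁ h^{d/2})² ‖X‖`, which makes `𝒜` injective (hence bijective in finite
dimension) and bounds the norm of its inverse. In the quotient of the two constants the factors
`h^{d/2}` cancel.
-/

open scoped RealInnerProductSpace

section InnerProductSpace

variable {E F : Type*} [NormedAddCommGroup E] [NormedAddCommGroup F] [InnerProductSpace ℝ F]

theorem norm_apply_le_of_inner_apply_le {T : E → F} {C : ℝ} (hC : 0 ≤ C)
    (hT : ∀ x y, ⟪T x, y⟫ ≤ C * ‖x‖ * ‖y‖) (x : E) : ‖T x‖ ≤ C * ‖x‖ := by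
  rcases (norm_nonneg (T x)).eq_or_lt with h0 | hpos
  · rw [← h0]; positivity
  have : ‖T x‖ * ‖T x‖ ≤ C * ‖x‖ * ‖T x‖ := by
    simpa only [real_inner_self_eq_norm_mul_norm] using hT x (T x)
  exact le_of_mul_le_mul_right this hpos

theorem mul_norm_le_norm_apply_of_le_inner {T : F → F} {C : ℝ}
    (hT : ∀ x, C * ‖x‖ ^ 2 ≤ ⟪T x, x⟫) (x : F) : C * ‖x‖ ≤ ‖T x‖ := by
  rcases (norm_nonneg x).eq_or_lt with h0 | hpos
  · rw [← h0, mul_zero]; exact norm_nonneg _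
  have : C * ‖x‖ * ‖x‖ ≤ ‖T x‖ * ‖x‖ := by
    rw [mul_assoc, ← sq]; exact (hT x).trans (real_inner_le_norm _ _)
  exact le_of_mul_le_mul_right this hpos

end InnerProductSpace

section NormedSpace

variable {E F : Type*} [NormedAddCommGroup E] [NormedSpace ℝ E]
  [NormedAddCommGroup F] [NormedSpace ℝ F]

theorem LinearMap.injective_of_mul_norm_le_norm_apply (T : E →ₗ[ℝ] F) {C : ℝ} (hC : 0 < C)
    (hT : ∀ x, C * ‖x‖ ≤ ‖T x‖) : Function.Injective T := by
  refine (injective_iff_map_eq_zero T).mpr fun x hx => norm_le_zero_iff.mp ?_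
  have := hT x
  rw [hx, norm_zero] at this
  exact nonpos_of_mul_nonpos_right this hC

theorem LinearMap.bijective_of_mul_norm_le_norm_apply [FiniteDimensional ℝ E] (T : E →ₗ[ℝ] E)
    {C : ℝ} (hC : 0 < C) (hT : ∀ x, C * ‖x‖ ≤ ‖T x‖) : Function.Bijective T :=
  have hinj := T.injective_of_mul_norm_le_norm_apply hC hT
  ⟨hinj, LinearMap.injective_iff_surjective.mp hinj⟩

theorem ContinuousLinearMap.opNorm_le_inv_of_rightInverse {T : E → F} (B : F →L[ℝ] E)
    {C : ℝ} (hC : 0 < C) (hT : ∀ x, C * ‖x‖ ≤ ‖T x‖) (hB : ∀ y, T (B y) = y) :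
    ‖B‖ ≤ C⁻¹ :=
  B.opNorm_le_bound (inv_nonneg.mpr hC.le) fun y => by
    rw [inv_mul_eq_div, le_div_iff₀' hC]
    simpa only [hB] using hT (B y)

end NormedSpace

section Form

variable {E V : Type*} [SeminormedAddGroup E] [SeminormedAddGroup V]

theorem form_comp_le_of_le_mul_norm_mul_norm {a : V → V → ℝ} {K : ℝ} (hK : 0 ≤ K)
    (ha : ∀ v w, a v w ≤ K * ‖v‖ * ‖w‖) {Φ : E → V} {β : ℝ} (hΦ : ∀ x, ‖Φ x‖ ≤ β * ‖x‖)
    (x y : E) : a (Φ x) (Φ y) ≤ K * β ^ 2 * ‖x‖ * ‖y‖ :=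
  calc a (Φ x) (Φ y) ≤ K * ‖Φ x‖ * ‖Φ y‖ := ha _ _
    _ ≤ K * (β * ‖x‖) * (β * ‖y‖) := by
      have := (norm_nonneg (Φ x)).trans (hΦ x)
      gcongr
      exacts [hΦ x, hΦ y]
    _ = K * β ^ 2 * ‖x‖ * ‖y‖ := by ring

theorem mul_norm_sq_le_form_comp_of_mul_norm_sq_le {a : V → V → ℝ} {K : ℝ} (hK : 0 ≤ K)
    (ha : ∀ v, K * ‖v‖ ^ 2 ≤ a v v) {Φ : E → V} {α : ℝ} (hα : 0 ≤ α)
    (hΦ : ∀ x, α * ‖x‖ ≤ ‖Φ x‖) (x : E) : K * α ^ 2 * ‖x‖ ^ 2 ≤ a (Φ x) (Φ x) :=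
  calc K * α ^ 2 * ‖x‖ ^ 2 = K * (α * ‖x‖) ^ 2 := by ring
    _ ≤ K * ‖Φ x‖ ^ 2 :=
      mul_le_mul_of_nonneg_left (pow_le_pow_left₀ (mul_nonneg hα (norm_nonneg x)) (hΦ x) 2) hK
    _ ≤ a (Φ x) (Φ x) := ha _

end Form

theorem abstract_condition_number_general {V : Type*} [NormedAddCommGroup V] [NormedSpace ℝ V]
    (N d : ℕ) (h : ℝ) (hh : 0 < h)
    (c₁ c₂ : ℝ) (hc₁ : 0 < c₁)
    (Φ : EuclideanSpace ℝ (Fin N) →ₗ[ℝ] V)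
    (hΦl : ∀ X : EuclideanSpace ℝ (Fin N), c₁ * h ^ ((d : ℝ) / 2) * ‖X‖ ≤ ‖Φ X‖)
    (hΦu : ∀ X : EuclideanSpace ℝ (Fin N), ‖Φ X‖ ≤ c₂ * h ^ ((d : ℝ) / 2) * ‖X‖)
    (A : V →ₗ[ℝ] V →ₗ[ℝ] ℝ) (m M : ℝ) (hm : 0 < m) (hM : 0 < M)
    (hbdd : ∀ v w : V, A v w ≤ M / h ^ 2 * ‖v‖ * ‖w‖)
    (hcoer : ∀ v : V, A v v ≥ m / h * ‖v‖ ^ 2)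
    (𝒜 : EuclideanSpace ℝ (Fin N) →L[ℝ] EuclideanSpace ℝ (Fin N))
    (h𝒜 : ∀ X Y : EuclideanSpace ℝ (Fin N), ⟪𝒜 X, Y⟫ = A (Φ X) (Φ Y)) :
    Function.Bijective 𝒜 ∧
      ∀ B : EuclideanSpace ℝ (Fin N) →L[ℝ] EuclideanSpace ℝ (Fin N),
        ((∀ X, B (𝒜 X) = X) ∧ (∀ Y, 𝒜 (B Y) = Y)) →
          ‖𝒜‖ * ‖B‖ ≤ (c₂ / c₁) ^ 2 * (M / m) / h := by
  set p := h ^ ((d : ℝ) / 2)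
  have hp : 0 < p := Real.rpow_pos_of_pos hh _
  set CU := M / h ^ 2 * (c₂ * p) ^ 2
  set CL := m / h * (c₁ * p) ^ 2
  have hCL : 0 < CL := by positivity
  have hupper : ∀ X, ‖𝒜 X‖ ≤ CU * ‖X‖ :=
    norm_apply_le_of_inner_apply_le (by positivity) fun X Y => by
      rw [h𝒜]; exact form_comp_le_of_le_mul_norm_mul_norm (by positivity) hbdd hΦu X Y
  have hlower : ∀ X, CL * ‖X‖ ≤ ‖𝒜 X‖ :=
    mul_norm_le_norm_apply_of_le_inner fun X => by
      rw [h𝒜]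
      exact mul_norm_sq_le_form_comp_of_mul_norm_sq_le (by positivity) hcoer (by positivity) hΦl X
  refine ⟨𝒜.toLinearMap.bijective_of_mul_norm_le_norm_apply hCL hlower, ?_⟩
  rintro B ⟨-, hB⟩
  calc ‖𝒜‖ * ‖B‖ ≤ CU * CL⁻¹ :=
        mul_le_mul (𝒜.opNorm_le_bound (by positivity) hupper)
          (B.opNorm_le_inv_of_rightInverse hCL hlower hB) (norm_nonneg _) (by positivity)
    _ = (c₂ / c₁) ^ 2 * (M / m) / h := by
      simp only [CU, CL]
      field_simp

/-- Abstract condition-number estimate: boundedness and coercivity of the bilinear form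
combined with a two-sided mass-matrix scaling of the basis expansion yield
`κ(𝒜) ≤ (c₂/c₁)² (M/m) h⁻¹`. -/
theorem abstract_condition_number {V : Type*} [NormedAddCommGroup V] [NormedSpace ℝ V]
    (N d : ℕ) (hN : 1 ≤ N) (hd : 1 ≤ d) (h : ℝ) (hh : 0 < h)
    (c₁ c₂ : ℝ) (hc₁ : 0 < c₁) (hc₂ : 0 < c₂)
    (Φ : EuclideanSpace ℝ (Fin N) →ₗ[ℝ] V)
    (hΦl : ∀ X : EuclideanSpace ℝ (Fin N), c₁ * h ^ ((d : ℝ) / 2) * ‖X‖ ≤ ‖Φ X‖)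
    (hΦu : ∀ X : EuclideanSpace ℝ (Fin N), ‖Φ X‖ ≤ c₂ * h ^ ((d : ℝ) / 2) * ‖X‖)
    (A : V →ₗ[ℝ] V →ₗ[ℝ] ℝ) (m M : ℝ) (hm : 0 < m) (hM : 0 < M)
    (hbdd : ∀ v w : V, A v w ≤ M / h ^ 2 * ‖v‖ * ‖w‖)
    (hcoer : ∀ v : V, A v v ≥ m / h * ‖v‖ ^ 2)
    (𝒜 : EuclideanSpace ℝ (Fin N) →L[ℝ] EuclideanSpace ℝ (Fin N))
    (h𝒜 : ∀ X Y : EuclideanSpace ℝ (Fin N), ⟪𝒜 X, Y⟫ = A (Φ X) (Φ Y)) :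
    Function.Bijective 𝒜 ∧
      ∀ B : EuclideanSpace ℝ (Fin N) →L[ℝ] EuclideanSpace ℝ (Fin N),
        ((∀ X, B (𝒜 X) = X) ∧ (∀ Y, 𝒜 (B Y) = Y)) →
          ‖𝒜‖ * ‖B‖ ≤ (c₂ / c₁) ^ 2 * (M / m) / h :=
  abstract_condition_number_general N d h hh c₁ c₂ hc₁ Φ hΦl hΦu A m M hm hM hbdd hcoer 𝒜 h𝒜
end

section
/- (Abstract reduction step in the co-normal jump estimate.) Let E be a real inner product space and let P, P⁺, P⁻ : E → E be linear maps that are symmetric, i.e. ⟨T u, v⟩ = ⟨u, T v⟩ for all u, v ∈ E and T ∈ {P, P⁺, P⁻}. Let b, b⁺, b⁻, n⁺, n⁻, m ∈ E and β, ε₁, ε₂ ≥ 0 satisfy: P b = b; P⁺ n⁺ = n⁺ and P⁻ n⁻ = n⁻; ‖n⁺‖ ≤ 1 and ‖n⁻‖ ≤ 1; ‖b‖ ≤ β; ‖b⁺ − P⁺ b‖ ≤ ε₁ and ‖b⁻ − P⁻ b‖ ≤ ε₁; ‖P n⁺ − m‖ ≤ ε₂ and ‖P n⁻ + m‖ ≤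 ε₂. Then |⟨b⁺, n⁺⟩ + ⟨b⁻, n⁻⟩| ≤ 2ε₁ + 2β·ε₂. -/
open scoped RealInnerProductSpace

/-!
Replacing each trace `b±` by `P± b` costs at most `ε₁` per side, and moving the symmetric
projections onto the co-normals turns `⟪P⁺ b, n⁺⟫ + ⟪P⁻ b, n⁻⟫` into
`⟪b, P n⁺ + P n⁻⟫ = ⟪b, (P n⁺ - m) + (P n⁻ + m)⟫`, where the lifted co-normals `±m` cancel;
Cauchy–Schwarz bounds each piece.
-/

section

variable {E : Type*} [NormedAddCommGroup E] [InnerProductSpace ℝ E]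

theorem abs_real_inner_le_of_norm_le {u v : E} {a c : ℝ} (hu : ‖u‖ ≤ a) (hv : ‖v‖ ≤ c) :
    |⟪u, v⟫| ≤ a * c :=
  (abs_real_inner_le_norm u v).trans
    (mul_le_mul hu hv (norm_nonneg v) ((norm_nonneg u).trans hu))

theorem inner_eq_inner_sub_add_inner_map {P T : E →ₗ[ℝ] E} (hP : P.IsSymmetric)
    (hT : T.IsSymmetric) {b n : E} (hPb : P b = b) (hTn : T n = n) (c : E) :
    ⟪c, n⟫ = ⟪c - T b, n⟫ + ⟪b, P n⟫ := by
  have hTb : ⟪T b, n⟫ = ⟪b, P n⟫ := by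
    rw [hT, hTn, ← hP, hPb]
  rw [inner_sub_left, hTb, sub_add_cancel]

end

theorem conormal_jump_estimate_general {E : Type*} [NormedAddCommGroup E] [InnerProductSpace ℝ E]
    (P Pp Pm : E →ₗ[ℝ] E)
    (hPsym : ∀ u v : E, ⟪P u, v⟫ = ⟪u, P v⟫)
    (hPpsym : ∀ u v : E, ⟪Pp u, v⟫ = ⟪u, Pp v⟫)
    (hPmsym : ∀ u v : E, ⟪Pm u, v⟫ = ⟪u, Pm v⟫)
    (b bp bm np nm m : E) (β ε₁ ε₂ : ℝ)
    (hPb : P b = b) (hnp : Pp np = np) (hnm : Pm nm = nm)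
    (hnp1 : ‖np‖ ≤ 1) (hnm1 : ‖nm‖ ≤ 1) (hbβ : ‖b‖ ≤ β)
    (hbp : ‖bp - Pp b‖ ≤ ε₁) (hbm : ‖bm - Pm b‖ ≤ ε₁)
    (hmp : ‖P np - m‖ ≤ ε₂) (hmm : ‖P nm + m‖ ≤ ε₂) :
    |⟪bp, np⟫ + ⟪bm, nm⟫| ≤ 2 * ε₁ + 2 * β * ε₂ := by
  rw [inner_eq_inner_sub_add_inner_map hPsym hPpsym hPb hnp,
    inner_eq_inner_sub_add_inner_map hPsym hPmsym hPb hnm]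
  have hlift : ⟪b, P np⟫ + ⟪b, P nm⟫ = ⟪b, (P np - m) + (P nm + m)⟫ := by
    rw [← inner_add_right, sub_add_add_cancel]
  have hlift_le : ‖(P np - m) + (P nm + m)‖ ≤ 2 * ε₂ :=
    (norm_add_le _ _).trans (by linarith)
  calc |⟪bp - Pp b, np⟫ + ⟪b, P np⟫ + (⟪bm - Pm b, nm⟫ + ⟪b, P nm⟫)|
      = |⟪bp - Pp b, np⟫ + ⟪bm - Pm b, nm⟫ + ⟪b, (P np - m) + (P nm + m)⟫| := by
        rw [← hlift]; congr 1; ring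
    _ ≤ |⟪bp - Pp b, np⟫| + |⟪bm - Pm b, nm⟫| + |⟪b, (P np - m) + (P nm + m)⟫| :=
        abs_add_three _ _ _
    _ ≤ ε₁ * 1 + ε₁ * 1 + β * (2 * ε₂) := by
        gcongr
        · exact abs_real_inner_le_of_norm_le hbp hnp1
        · exact abs_real_inner_le_of_norm_le hbm hnm1
        · exact abs_real_inner_le_of_norm_le hbβ hlift_le
    _ = 2 * ε₁ + 2 * β * ε₂ := by ring

/-- Abstract reduction step in the co-normal jump estimate: the normal-weighted jump of the
discrete velocity is controlled by the velocity approximation error and the deviation of the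
projected discrete co-normals from the (exactly opposite) lifted co-normals. -/
theorem conormal_jump_estimate {E : Type*} [NormedAddCommGroup E] [InnerProductSpace ℝ E]
    (P Pp Pm : E →ₗ[ℝ] E)
    (hPsym : ∀ u v : E, ⟪P u, v⟫ = ⟪u, P v⟫)
    (hPpsym : ∀ u v : E, ⟪Pp u, v⟫ = ⟪u, Pp v⟫)
    (hPmsym : ∀ u v : E, ⟪Pm u, v⟫ = ⟪u, Pm v⟫)
    (b bp bm np nm m : E) (β ε₁ ε₂ : ℝ)
    (hβ : 0 ≤ β) (hε₁ : 0 ≤ ε₁) (hε₂ : 0 ≤ ε₂)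
    (hPb : P b = b) (hnp : Pp np = np) (hnm : Pm nm = nm)
    (hnp1 : ‖np‖ ≤ 1) (hnm1 : ‖nm‖ ≤ 1) (hbβ : ‖b‖ ≤ β)
    (hbp : ‖bp - Pp b‖ ≤ ε₁) (hbm : ‖bm - Pm b‖ ≤ ε₁)
    (hmp : ‖P np - m‖ ≤ ε₂) (hmm : ‖P nm + m‖ ≤ ε₂) :
    |⟪bp, np⟫ + ⟪bm, nm⟫| ≤ 2 * ε₁ + 2 * β * ε₂ :=
  conormal_jump_estimate_general P Pp Pm hPsym hPpsym hPmsym b bp bm np nm m β ε₁ ε₂ hPb hnp hnm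
    hnp1 hnm1 hbβ hbp hbm hmp hmm
end
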